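/- arXiv:1909.03192 — 8 statements merged into one kernel-verified Lean document; each statement's English description precedes it below -/
import Mathlib

section
/- For every initial state (x₀, ẋ₀) ∈ ℝ² such that Σ₀·ẋ₀ < 0 (equivalently, Σ₀·ẋ₀ = −|ẋ₀| with ẋ₀ ≠ 0), one has Λ₀ > |ẋ₀|. -/
/-- If `σ₀·v₀ < 0` then `Λ₀ > |v₀|`, where
`σ₀ = sgn(x₀ + sgn(v₀)·v₀²/2)` and `Λ₀ = √(σ₀·x₀ + v₀²/2)`. -/
theorem double_integrator_lambda_gt_abs_velocity
    (x₀ v₀ : ℝ)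
    (h : Real.sign (x₀ + Real.sign v₀ * v₀ ^ 2 / 2) * v₀ < 0) :
    Real.sqrt (Real.sign (x₀ + Real.sign v₀ * v₀ ^ 2 / 2) * x₀ + v₀ ^ 2 / 2) > |v₀| := by
  rcases lt_trichotomy (x₀ + Real.sign v₀ * v₀ ^ 2 / 2) 0 with hF | hF | hF
  · rw [Real.sign_of_neg hF] at h ⊢
    have hv : 0 < v₀ := by nlinarith
    rw [Real.sign_of_pos hv] at hF
    rw [gt_iff_lt, Real.lt_sqrt (abs_nonneg v₀), sq_abs]
    nlinarith
  · simp [hF] at h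
  · rw [Real.sign_of_pos hF] at h ⊢
    have hv : v₀ < 0 := by nlinarith
    rw [Real.sign_of_neg hv] at hF
    rw [gt_iff_lt, Real.lt_sqrt (abs_nonneg v₀), sq_abs]
    nlinarith
end

section
/- For every initial state (x₀, ẋ₀) ∈ ℝ² with F₀ ≠ 0, the first bang duration Δ₁ = Λ₀ + Σ₀·ẋ₀ is strictly positive. -/
/-- If `F₀ ≠ 0` then the first bang duration `Δ₁ = Λ₀ + σ₀·v₀` is strictly positive. -/
theorem double_integrator_first_bang_pos
    (x₀ v₀ : ℝ) (hF : x₀ + Real.sign v₀ * v₀ ^ 2 / 2 ≠ 0) :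
    Real.sqrt (Real.sign (x₀ + Real.sign v₀ * v₀ ^ 2 / 2) * x₀ + v₀ ^ 2 / 2)
      + Real.sign (x₀ + Real.sign v₀ * v₀ ^ 2 / 2) * v₀ > 0 := by
  rcases hF.lt_or_gt with hFneg | hFpos
  · rw [Real.sign_of_neg hFneg]
    rcases le_or_gt v₀ 0 with hv | hv
    · have hx : 0 < -1 * x₀ + v₀ ^ 2 / 2 := by
        rcases eq_or_lt_of_le hv with h0 | h0
        · have : Real.sign v₀ = 0 := by rw [h0]; exact Real.sign_zero
          rw [this] at hFneg; nlinarith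
        · have : Real.sign v₀ = -1 := Real.sign_of_neg h0
          rw [this] at hFneg; nlinarith
      have h := Real.sqrt_pos.mpr hx
      nlinarith
    · have hs : Real.sign v₀ = 1 := Real.sign_of_pos hv
      rw [hs] at hFneg
      have hx : v₀ ^ 2 < -1 * x₀ + v₀ ^ 2 / 2 := by nlinarith
      have := Real.lt_sqrt_of_sq_lt hx
      nlinarith
  · rw [Real.sign_of_pos hFpos]
    rcases le_or_gt 0 v₀ with hv | hv
    · have hx : 0 < 1 * x₀ + v₀ ^ 2 / 2 := by
        rcases eq_or_lt_of_le hv with h0 | h0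
        · have : Real.sign v₀ = 0 := by rw [← h0]; exact Real.sign_zero
          rw [this] at hFpos; nlinarith
        · have : Real.sign v₀ = 1 := Real.sign_of_pos h0
          rw [this] at hFpos; nlinarith
      have h := Real.sqrt_pos.mpr hx
      nlinarith
    · have hs : Real.sign v₀ = -1 := Real.sign_of_neg hv
      rw [hs] at hFpos
      have hx : (-v₀) ^ 2 < 1 * x₀ + v₀ ^ 2 / 2 := by nlinarith
      have := Real.lt_sqrt_of_sq_lt hx
      nlinarith
end

section
/- Let (x₀, ẋ₀) ∈ ℝ² with F₀ ≠ 0, and define the switch point coordinates x_s = (1/2)·(x₀ + (1/2)·Σ₀·ẋ₀²) and ẋ_s = −Σ₀·Λ₀. Then the switch point lies on the switching curve: x_s + sgn(ẋ_s)·ẋ_s²/2 = 0. -/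
/-- If `F₀ ≠ 0`, the switch point `(x_s, ẋ_s)` with
`x_s = (1/2)(x₀ + (1/2)σ₀ v₀²)` and `ẋ_s = −σ₀ Λ₀` lies on the switching curve. -/
theorem double_integrator_switch_point_on_switching_curve
    (x₀ v₀ : ℝ) (hF : x₀ + Real.sign v₀ * v₀ ^ 2 / 2 ≠ 0)
    (σ₀ Λ₀ xs vs : ℝ)
    (hσ : σ₀ = Real.sign (x₀ + Real.sign v₀ * v₀ ^ 2 / 2))
    (hΛ : Λ₀ = Real.sqrt (σ₀ * x₀ + v₀ ^ 2 / 2))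
    (hxs : xs = (1 / 2) * (x₀ + (1 / 2) * σ₀ * v₀ ^ 2))
    (hvs : vs = -σ₀ * Λ₀) :
    xs + Real.sign vs * vs ^ 2 / 2 = 0 := by
  set F := x₀ + Real.sign v₀ * v₀ ^ 2 / 2 with hFdef
  have hv3 := Real.sign_apply_eq v₀
  have hvcases : (Real.sign v₀ = -1 ∧ v₀ < 0) ∨ (Real.sign v₀ = 0 ∧ v₀ = 0) ∨ (Real.sign v₀ = 1 ∧ 0 < v₀) := by
    rcases lt_trichotomy v₀ 0 with h | h | h
    · exact Or.inl ⟨Real.sign_of_neg h, h⟩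
    · exact Or.inr (Or.inl ⟨by simp [h], h⟩)
    · exact Or.inr (Or.inr ⟨Real.sign_of_pos h, h⟩)
  have hFcases : (σ₀ = 1 ∧ 0 < F) ∨ (σ₀ = -1 ∧ F < 0) := by
    rcases lt_trichotomy F 0 with h | h | h
    · exact Or.inr ⟨by rw [hσ, Real.sign_of_neg h], h⟩
    · exact absurd h hF
    · exact Or.inl ⟨by rw [hσ, Real.sign_of_pos h], h⟩
  have hpos : 0 < σ₀ * x₀ + v₀ ^ 2 / 2 := by
    rcases hFcases with ⟨hs, hf⟩ | ⟨hs, hf⟩ <;>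
    rcases hvcases with ⟨hw, hv⟩ | ⟨hw, hv⟩ | ⟨hw, hv⟩ <;>
    rw [hFdef, hw] at hf <;> rw [hs] <;> nlinarith [sq_nonneg v₀]
  have hΛpos : 0 < Λ₀ := by rw [hΛ]; exact Real.sqrt_pos.mpr hpos
  have hΛsq : Λ₀ ^ 2 = σ₀ * x₀ + v₀ ^ 2 / 2 := by
    rw [hΛ, Real.sq_sqrt hpos.le]
  rcases hFcases with ⟨hs, _⟩ | ⟨hs, _⟩
  · have hvsneg : vs < 0 := by rw [hvs, hs]; linarith
    rw [Real.sign_of_neg hvsneg, hxs, hvs, hs]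
    nlinarith [hΛsq]
  · have hvspos : 0 < vs := by rw [hvs, hs]; linarith
    rw [Real.sign_of_pos hvspos, hxs, hvs, hs]
    nlinarith [hΛsq]
end

section
/- Let (x₀, ẋ₀) ∈ ℝ² with F₀ ≠ 0, u₁* = −Σ₀, Δ₁ = Λ₀ + Σ₀·ẋ₀, x_s = (1/2)·(x₀ + (1/2)·Σ₀·ẋ₀²), ẋ_s = −Σ₀·Λ₀. Then the solution of the double integrator under the constant control u₁* starting at (x₀, ẋ₀) reaches the switch point at time Δ₁: u₁*·Δ₁²/2 + ẋ₀·Δ₁ + x₀ = x_s and u₁*·Δ₁ + ẋ₀ = ẋ_s. -/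
/-- If `F₀ ≠ 0`, the solution of the double integrator under the constant control
`u₁* = −σ₀` starting at `(x₀, v₀)` reaches the switch point `(x_s, ẋ_s)` at time `Δ₁`. -/
theorem double_integrator_first_bang_reaches_switch_point
    (x₀ v₀ : ℝ) (hF : x₀ + Real.sign v₀ * v₀ ^ 2 / 2 ≠ 0)
    (σ₀ Λ₀ u₁ Δ₁ xs vs : ℝ)
    (hσ : σ₀ = Real.sign (x₀ + Real.sign v₀ * v₀ ^ 2 / 2))
    (hΛ : Λ₀ = Real.sqrt (σ₀ * x₀ + v₀ ^ 2 / 2))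
    (hu : u₁ = -σ₀)
    (hΔ : Δ₁ = Λ₀ + σ₀ * v₀)
    (hxs : xs = (1 / 2) * (x₀ + (1 / 2) * σ₀ * v₀ ^ 2))
    (hvs : vs = -σ₀ * Λ₀) :
    u₁ * Δ₁ ^ 2 / 2 + v₀ * Δ₁ + x₀ = xs ∧ u₁ * Δ₁ + v₀ = vs := by
  set F : ℝ := x₀ + Real.sign v₀ * v₀ ^ 2 / 2 with hFdef
  -- bound on sign v₀ * v₀^2
  have hsv : Real.sign v₀ * v₀ ^ 2 ≤ v₀ ^ 2 ∧ -(v₀ ^ 2) ≤ Real.sign v₀ * v₀ ^ 2 := by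
    rcases lt_trichotomy v₀ 0 with h | h | h
    · rw [Real.sign_of_neg h]; constructor <;> nlinarith
    · simp [h]
    · rw [Real.sign_of_pos h]; constructor <;> nlinarith
  have key : σ₀ ^ 2 = 1 ∧ 0 ≤ σ₀ * x₀ + v₀ ^ 2 / 2 := by
    rcases lt_trichotomy F 0 with h | h | h
    · rw [hσ, Real.sign_of_neg h]
      constructor
      · ring
      · have := hsv.1
        simp only [hFdef] at h
        nlinarith
    · exact absurd h hF
    · rw [hσ, Real.sign_of_pos h]
      constructor
      · ring
      · have := hsv.2
        simp only [hFdef] at h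
        nlinarith
  have hΛ2 : Λ₀ ^ 2 = σ₀ * x₀ + v₀ ^ 2 / 2 := by
    rw [hΛ, Real.sq_sqrt key.2]
  have hσ2 := key.1
  constructor
  · rw [hu, hΔ, hxs]
    linear_combination (-σ₀ / 2) * hΛ2 + (-x₀ / 2 - v₀ * Λ₀ - σ₀ * v₀ ^ 2 / 2) * hσ2
  · rw [hu, hΔ, hvs]
    linear_combination (-v₀) * hσ2
end

section
/- Let (x₀, ẋ₀) ∈ ℝ² with F₀ ≠ 0, u₂* = Σ₀, Δ₂ = Λ₀, x_s = (1/2)·(x₀ + (1/2)·Σ₀·ẋ₀²), ẋ_s = −Σ₀·Λ₀. Then the solution of the double integrator under the constant control u₂* starting at the switch point (x_s, ẋ_s) reaches the origin at time Δ₂: u₂*·Δ₂²/2 + ẋ_s·Δ₂ + x_s = 0 and u₂*·Δ₂ + ẋ_s = 0. -/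
/-- If `F₀ ≠ 0`, the solution of the double integrator under the constant control
`u₂* = σ₀` starting at the switch point `(x_s, ẋ_s)` reaches the origin at time `Δ₂ = Λ₀`. -/
theorem double_integrator_second_bang_reaches_origin
    (x₀ v₀ : ℝ) (hF : x₀ + Real.sign v₀ * v₀ ^ 2 / 2 ≠ 0)
    (σ₀ Λ₀ u₂ Δ₂ xs vs : ℝ)
    (hσ : σ₀ = Real.sign (x₀ + Real.sign v₀ * v₀ ^ 2 / 2))
    (hΛ : Λ₀ = Real.sqrt (σ₀ * x₀ + v₀ ^ 2 / 2))
    (hu : u₂ = σ₀)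
    (hΔ : Δ₂ = Λ₀)
    (hxs : xs = (1 / 2) * (x₀ + (1 / 2) * σ₀ * v₀ ^ 2))
    (hvs : vs = -σ₀ * Λ₀) :
    u₂ * Δ₂ ^ 2 / 2 + vs * Δ₂ + xs = 0 ∧ u₂ * Δ₂ + vs = 0 := by
  set F := x₀ + Real.sign v₀ * v₀ ^ 2 / 2 with hFdef
  have hpos : 0 < σ₀ * F := hσ ▸ Real.sign_mul_pos_of_ne_zero F hF
  have hs : Real.sign v₀ = -1 ∨ Real.sign v₀ = 0 ∨ Real.sign v₀ = 1 :=
    Real.sign_apply_eq v₀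
  have hσ2 : σ₀ ^ 2 = 1 := by
    rcases Real.sign_apply_eq_of_ne_zero F hF with h | h <;> rw [hσ, h] <;> ring
  have hc : 0 ≤ σ₀ * x₀ + v₀ ^ 2 / 2 := by
    have hv : v₀ ^ 2 / 2 ≥ σ₀ * (Real.sign v₀ * v₀ ^ 2 / 2) := by
      have hσ1 : σ₀ = 1 ∨ σ₀ = -1 := by
        rcases Real.sign_apply_eq_of_ne_zero F hF with h | h <;> rw [hσ, h] <;> simp
      have h2 : (0:ℝ) ≤ v₀ ^ 2 / 2 := by positivity
      rcases hσ1 with h | h <;> rcases hs with h' | h' | h' <;> rw [h, h'] <;> nlinarith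
    have hpos' : 0 < σ₀ * x₀ + σ₀ * (Real.sign v₀ * v₀ ^ 2 / 2) := by
      have h := hpos; rw [hFdef] at h; nlinarith [h]
    linarith [hpos', hv]
  have hΛ2 : Λ₀ ^ 2 = σ₀ * x₀ + v₀ ^ 2 / 2 := by
    rw [hΛ, sq, Real.mul_self_sqrt hc]
  constructor
  · rw [hu, hΔ, hvs, hxs]
    linear_combination (-σ₀/2) * hΛ2 + (-x₀/2) * hσ2
  · rw [hu, hΔ, hvs]; ring
end

section
/- Let (x₀, ẋ₀) ∈ ℝ² with F₀ ≠ 0, and set Δ₁ = Λ₀ + Σ₀·ẋ₀ and T* = 2Λ₀ + Σ₀·ẋ₀. Then there exist a continuously differentiable function x : ℝ → ℝ and a control u : ℝ → ℝ with |u(t)| ≤ 1 for all t ∈ [0, T*], such that x(0) = x₀, the derivative of x at 0 equals ẋ₀, for all t ∈ [0, T*] with t ≠ Δ₁ the derivative of (deriv x) at t equals u(t) (with u(t) = −Σ₀ for t < Δ₁ and u(t) = Σ₀ for t > Δ₁), and x(T*) = 0 with deriv x (T*) = 0. (The bang-bang control with one switch at Δ₁ steers the double integrator from (x₀, ẋ₀)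 to the origin in time T*.) -/
/-!
With `σ = ±1`, the velocity `v₀ - σΔ + σ|t - Δ|` is continuous, has slope `-σ` before the switching
time `Δ` and `σ` after it, and integrates to an explicit `C¹` position. The condition `F₀ ≠ 0` makes
`σ₀x₀ + ẋ₀²/2` positive and `Δ₁ > 0` (if `σ₀ẋ₀ < 0`, then `sgn ẋ₀ = -σ₀` and `σ₀F₀ > 0` reads
`σ₀x₀ > ẋ₀²/2`); arriving at rest at the origin at time `T* = Δ₁ + Λ₀` is then the identity
`Λ₀² = σ₀x₀ + ẋ₀²/2`.
-/

theorem hasDerivAt_mul_abs_self (t : ℝ) : HasDerivAt (fun s : ℝ => s * |s|) (2 * |t|) t := by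
  rcases eq_or_ne t 0 with rfl | ht
  · rw [hasDerivAt_iff_isLittleO_nhds_zero]
    simp only [zero_add, abs_zero, mul_zero, sub_zero, smul_zero]
    refine Asymptotics.IsLittleO.of_norm_left <|
      (Asymptotics.isLittleO_pow_id one_lt_two).norm_left.congr_left fun h => ?_
    simp [sq]
  · refine ((hasDerivAt_id' t).mul (hasDerivAt_abs ht)).congr_deriv ?_
    rw [one_mul, mul_comm, sign_mul_self, two_mul]

/-- The constant `Δ|Δ|` puts the trajectory at `x₀` at time `0`; its velocity is `v₀` there only
when `0 ≤ Δ`. -/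
noncomputable def bangBangTrajectory (x₀ v₀ σ Δ t : ℝ) : ℝ :=
  x₀ + (v₀ - σ * Δ) * t + σ * ((t - Δ) * |t - Δ| + Δ * |Δ|) / 2

section bangBangTrajectory

variable (x₀ v₀ σ Δ : ℝ)

theorem hasDerivAt_bangBangTrajectory (t : ℝ) :
    HasDerivAt (bangBangTrajectory x₀ v₀ σ Δ) (v₀ - σ * Δ + σ * |t - Δ|) t := by
  have hsq := (hasDerivAt_mul_abs_self (t - Δ)).comp_sub_const t Δ
  have := ((hasDerivAt_id' t).const_mul (v₀ - σ * Δ)).const_add x₀ |>.add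
    (((hsq.add_const (Δ * |Δ|)).const_mul σ).div_const 2)
  exact this.congr_deriv (by ring)

theorem deriv_bangBangTrajectory :
    deriv (bangBangTrajectory x₀ v₀ σ Δ) = fun t => v₀ - σ * Δ + σ * |t - Δ| :=
  funext fun t => (hasDerivAt_bangBangTrajectory x₀ v₀ σ Δ t).deriv

theorem contDiff_one_bangBangTrajectory : ContDiff ℝ 1 (bangBangTrajectory x₀ v₀ σ Δ) := by
  rw [contDiff_one_iff_deriv, deriv_bangBangTrajectory]
  exact ⟨fun t => (hasDerivAt_bangBangTrajectory x₀ v₀ σ Δ t).differentiableAt, by fun_prop⟩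

theorem hasDerivAt_deriv_bangBangTrajectory {t : ℝ} (ht : t ≠ Δ) :
    HasDerivAt (deriv (bangBangTrajectory x₀ v₀ σ Δ)) (σ * SignType.sign (t - Δ)) t := by
  rw [deriv_bangBangTrajectory]
  have := (hasDerivAt_abs (sub_ne_zero.mpr ht)).comp_sub_const t Δ
  exact (this.const_mul σ).const_add _

theorem bangBangTrajectory_zero : bangBangTrajectory x₀ v₀ σ Δ 0 = x₀ := by
  simp [bangBangTrajectory, abs_neg]

theorem deriv_bangBangTrajectory_zero (hΔ : 0 ≤ Δ) :
    deriv (bangBangTrajectory x₀ v₀ σ Δ) 0 = v₀ := by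
  simp [deriv_bangBangTrajectory, abs_of_nonneg hΔ]

variable {x₀ v₀ σ Δ}

theorem deriv_bangBangTrajectory_add_eq_zero {Λ : ℝ} (hσ : σ ^ 2 = 1) (hΛ : 0 ≤ Λ)
    (hΔ : Δ = Λ + σ * v₀) : deriv (bangBangTrajectory x₀ v₀ σ Δ) (Δ + Λ) = 0 := by
  rw [deriv_bangBangTrajectory]
  dsimp only
  rw [add_sub_cancel_left, abs_of_nonneg hΛ, hΔ]
  linear_combination -v₀ * hσ

theorem bangBangTrajectory_add_eq_zero {Λ : ℝ} (hσ : σ ^ 2 = 1) (hΛ : 0 ≤ Λ)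
    (hΛsq : Λ ^ 2 = σ * x₀ + v₀ ^ 2 / 2) (hΔ₀ : 0 ≤ Δ) (hΔ : Δ = Λ + σ * v₀) :
    bangBangTrajectory x₀ v₀ σ Δ (Δ + Λ) = 0 := by
  rw [bangBangTrajectory, add_sub_cancel_left, abs_of_nonneg hΛ, abs_of_nonneg hΔ₀, hΔ]
  linear_combination -σ * hΛsq - (x₀ + 2 * v₀ * Λ + σ * v₀ ^ 2 / 2) * hσ

end bangBangTrajectory

theorem Real.abs_sign_of_ne_zero {r : ℝ} (hr : r ≠ 0) : |Real.sign r| = 1 := by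
  rcases Real.sign_apply_eq_of_ne_zero r hr with h | h <;> simp [h]

theorem Real.sign_mul_sq (r : ℝ) : Real.sign r * r ^ 2 = r * |r| := by
  rcases lt_trichotomy r 0 with h | rfl | h
  · rw [Real.sign_of_neg h, abs_of_neg h]; ring
  · simp
  · rw [Real.sign_of_pos h, abs_of_pos h]; ring

section SwitchingData

variable {x₀ v₀ σ : ℝ}

theorem mul_add_sq_div_two_pos (hσ : |σ| = 1) (hF : 0 < σ * (x₀ + v₀ * |v₀| / 2)) :
    0 < σ * x₀ + v₀ ^ 2 / 2 := by
  have habs : |σ * (v₀ * |v₀|)| = v₀ ^ 2 := by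
    rw [abs_mul, abs_mul, abs_abs, hσ, abs_mul_abs_self, one_mul, sq]
  nlinarith [le_abs_self (σ * (v₀ * |v₀|))]

theorem neg_mul_lt_sqrt (hσ : |σ| = 1) (hF : 0 < σ * (x₀ + v₀ * |v₀| / 2)) :
    -(σ * v₀) < √(σ * x₀ + v₀ ^ 2 / 2) := by
  rcases le_or_gt 0 (σ * v₀) with h | h
  · linarith [Real.sqrt_pos.mpr (mul_add_sq_div_two_pos hσ hF)]
  · have hv : σ * v₀ = -|v₀| := by
      rw [← neg_neg (σ * v₀), ← abs_of_neg h, abs_mul, hσ, one_mul]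
    have hF' : σ * (x₀ + v₀ * |v₀| / 2) = σ * x₀ - v₀ ^ 2 / 2 := by
      rw [← sq_abs v₀]; linear_combination (|v₀| / 2) * hv
    rw [Real.lt_sqrt (by linarith), neg_sq, hv, neg_sq, sq_abs]
    linarith

end SwitchingData

/-- If `F₀ ≠ 0`, the bang-bang control with one switch at `Δ₁ = Λ₀ + σ₀·v₀`
steers the double integrator from `(x₀, v₀)` to the origin in time
`T* = 2Λ₀ + σ₀·v₀`. -/
theorem double_integrator_bang_bang_steers_to_origin
    (x₀ v₀ : ℝ) (hF : x₀ + Real.sign v₀ * v₀ ^ 2 / 2 ≠ 0)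
    (σ₀ Λ₀ Δ₁ T : ℝ)
    (hσ : σ₀ = Real.sign (x₀ + Real.sign v₀ * v₀ ^ 2 / 2))
    (hΛ : Λ₀ = Real.sqrt (σ₀ * x₀ + v₀ ^ 2 / 2))
    (hΔ : Δ₁ = Λ₀ + σ₀ * v₀)
    (hT : T = 2 * Λ₀ + σ₀ * v₀) :
    ∃ (x : ℝ → ℝ) (u : ℝ → ℝ),
      ContDiff ℝ 1 x
      ∧ (∀ t ∈ Set.Icc (0 : ℝ) T, |u t| ≤ 1)
      ∧ x 0 = x₀
      ∧ deriv x 0 = v₀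
      ∧ (∀ t ∈ Set.Icc (0 : ℝ) T, t ≠ Δ₁ → deriv (deriv x) t = u t)
      ∧ (∀ t ∈ Set.Icc (0 : ℝ) T, t < Δ₁ → u t = -σ₀)
      ∧ (∀ t ∈ Set.Icc (0 : ℝ) T, t > Δ₁ → u t = σ₀)
      ∧ x T = 0
      ∧ deriv x T = 0 := by
  have hσ_abs : |σ₀| = 1 := hσ ▸ Real.abs_sign_of_ne_zero hF
  have hσ_sq : σ₀ ^ 2 = 1 := by rw [← sq_abs, hσ_abs, one_pow]
  have hσF : 0 < σ₀ * (x₀ + v₀ * |v₀| / 2) := by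
    rw [← Real.sign_mul_sq, hσ]; exact Real.sign_mul_pos_of_ne_zero _ hF
  have hΛ_nonneg : 0 ≤ Λ₀ := hΛ ▸ Real.sqrt_nonneg _
  have hΛ_sq : Λ₀ ^ 2 = σ₀ * x₀ + v₀ ^ 2 / 2 := by
    rw [hΛ, Real.sq_sqrt (mul_add_sq_div_two_pos hσ_abs hσF).le]
  have hΔ_pos : 0 < Δ₁ := by linarith [hΛ ▸ neg_mul_lt_sqrt hσ_abs hσF]
  obtain rfl : T = Δ₁ + Λ₀ := by linarith
  refine ⟨bangBangTrajectory x₀ v₀ σ₀ Δ₁, fun t => σ₀ * SignType.sign (t - Δ₁),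
    contDiff_one_bangBangTrajectory .., fun t _ => ?_, bangBangTrajectory_zero ..,
    deriv_bangBangTrajectory_zero _ _ _ _ hΔ_pos.le,
    fun t _ ht => (hasDerivAt_deriv_bangBangTrajectory _ _ _ _ ht).deriv,
    fun t _ ht => by simp [sub_neg.mpr ht], fun t _ ht => by simp [sub_pos.mpr ht],
    bangBangTrajectory_add_eq_zero hσ_sq hΛ_nonneg hΛ_sq hΔ_pos.le hΔ,
    deriv_bangBangTrajectory_add_eq_zero hσ_sq hΛ_nonneg hΔ⟩
  rw [abs_mul, hσ_abs, one_mul]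
  rcases lt_trichotomy (t - Δ₁) 0 with h | h | h <;> simp [h]
end

section
/- Let (x₀, ẋ₀) ∈ ℝ² with F₀ ≠ 0 and T* = 2Λ₀ + Σ₀·ẋ₀. Let T ≥ 0 and let x : ℝ → ℝ be continuously differentiable with deriv x differentiable on [0, T], such that |(deriv (deriv x))(t)| ≤ 1 for all t ∈ [0, T], x(0) = x₀, deriv x (0) = ẋ₀, x(T) = 0, and deriv x (T) = 0. Then T ≥ T*. (T* = 2Λ₀ + Σ₀·ẋ₀ is a lower bound on the time of any admissible transfer of the double integrator from (x₀, ẋ₀) to the origin; together with the achievability of T* by the one-switch bang-bang control, it is the minimum time.) -/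
/-!
Since `|ẍ| ≤ 1`, the velocity `v` is `1`-Lipschitz, so `v t ≥ v₀ - t` and `v t ≥ t - T` on `[0, T]`.
The two bounds cross at `m = (T + v₀) / 2`; comparing `x` with the parabolas they integrate to,
on `[0, m]` and on `[m, T]`, gives `x₀ + v₀² / 2 ≤ ((T - v₀) / 2) ²`, that is
`T ≥ 2 √(x₀ + v₀² / 2) + v₀`. This is the claim when `F₀ > 0`; when `F₀ < 0`, apply it to `-x`.
-/

open Set

theorem sub_le_sub_of_hasDerivAt_le {f g f' g' : ℝ → ℝ} {a b : ℝ} (hab : a ≤ b)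
    (hf : ContinuousOn f (Icc a b)) (hg : ContinuousOn g (Icc a b))
    (hf' : ∀ t ∈ Ioo a b, HasDerivAt f (f' t) t) (hg' : ∀ t ∈ Ioo a b, HasDerivAt g (g' t) t)
    (hle : ∀ t ∈ Ioo a b, f' t ≤ g' t) : f b - f a ≤ g b - g a := by
  have hmono : MonotoneOn (g - f) (Icc a b) := by
    refine monotoneOn_of_hasDerivWithinAt_nonneg (f' := g' - f') (convex_Icc a b) (hg.sub hf)
      ?_ ?_ <;> rw [interior_Icc] <;> intro t ht
    · exact ((hg' t ht).sub (hf' t ht)).hasDerivWithinAt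
    · exact sub_nonneg.2 (hle t ht)
  have := hmono (left_mem_Icc.2 hab) (right_mem_Icc.2 hab) hab
  simp only [Pi.sub_apply] at this
  linarith

theorem lipschitzOnWith_one_of_abs_hasDerivAt_le_one {v v' : ℝ → ℝ} {a b : ℝ}
    (hv : ContinuousOn v (Icc a b)) (hv' : ∀ t ∈ Ioo a b, HasDerivAt v (v' t) t)
    (hbound : ∀ t ∈ Ioo a b, |v' t| ≤ 1) : LipschitzOnWith 1 v (Icc a b) := by
  have hle : ∀ s ∈ Icc a b, ∀ t ∈ Icc a b, s ≤ t → |v t - v s| ≤ t - s := by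
    intro s hs t ht hst
    have hsub : Icc s t ⊆ Icc a b := Icc_subset_Icc hs.1 ht.2
    have hv's : ∀ u ∈ Ioo s t, HasDerivAt v (v' u) u :=
      fun u hu => hv' u (Ioo_subset_Ioo hs.1 ht.2 hu)
    have hbound' : ∀ u ∈ Ioo s t, |v' u| ≤ 1 :=
      fun u hu => hbound u (Ioo_subset_Ioo hs.1 ht.2 hu)
    have upper := sub_le_sub_of_hasDerivAt_le hst (hv.mono hsub) continuousOn_id hv's
      (fun u _ => hasDerivAt_id u) fun u hu => (abs_le.1 (hbound' u hu)).2
    have lower := sub_le_sub_of_hasDerivAt_le hst continuousOn_neg (hv.mono hsub)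
      (fun u _ => hasDerivAt_neg u) hv's fun u hu => (abs_le.1 (hbound' u hu)).1
    simp only [id] at upper
    exact abs_le.2 ⟨by linarith, by linarith⟩
  refine LipschitzOnWith.mk_one fun s hs t ht => ?_
  rw [Real.dist_eq, Real.dist_eq]
  rcases le_total s t with hst | hts
  · rw [abs_sub_comm, abs_sub_comm s, abs_of_nonneg (sub_nonneg.2 hst)]
    exact hle s hs t ht hst
  · rw [abs_of_nonneg (sub_nonneg.2 hts)]
    exact hle t ht s hs hts

theorem abs_sub_le_sub_of_lipschitzOnWith_one {v : ℝ → ℝ} {S : Set ℝ}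
    (hv : LipschitzOnWith 1 v S) {s t : ℝ} (hs : s ∈ S) (ht : t ∈ S) (hst : s ≤ t) :
    |v t - v s| ≤ t - s := by
  have := hv.dist_le_mul t ht s hs
  rwa [Real.dist_eq, Real.dist_eq, NNReal.coe_one, one_mul,
    abs_of_nonneg (sub_nonneg.2 hst)] at this

section Trajectory

variable {x v : ℝ → ℝ} {T : ℝ}

theorem add_sq_div_two_le_of_reaches_origin (hT : 0 ≤ T)
    (hx : ∀ t ∈ Icc 0 T, HasDerivAt x (v t) t) (hv : LipschitzOnWith 1 v (Icc 0 T))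
    (hxT : x T = 0) (hvT : v T = 0) :
    x 0 + v 0 ^ 2 / 2 ≤ ((T - v 0) / 2) ^ 2 := by
  have h0 : (0 : ℝ) ∈ Icc 0 T := left_mem_Icc.2 hT
  have hT' : T ∈ Icc 0 T := right_mem_Icc.2 hT
  have hv_start : ∀ t ∈ Icc 0 T, v 0 - t ≤ v t := fun t ht => by
    have := abs_sub_le_sub_of_lipschitzOnWith_one hv h0 ht ht.1
    linarith [(abs_le.1 this).1]
  have hv_end : ∀ t ∈ Icc 0 T, t - T ≤ v t := fun t ht => by
    have := abs_sub_le_sub_of_lipschitzOnWith_one hv ht hT' ht.2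
    linarith [(abs_le.1 this).2]
  set m := (T + v 0) / 2 with hm_def
  have hm : m ∈ Icc 0 T := by
    constructor <;> linarith [hv_start T hT', hv_end 0 h0]
  have hxc : ContinuousOn x (Icc 0 T) := fun t ht => (hx t ht).continuousAt.continuousWithinAt
  have hIcc₁ : Icc 0 m ⊆ Icc 0 T := Icc_subset_Icc le_rfl hm.2
  have hIcc₂ : Icc m T ⊆ Icc 0 T := Icc_subset_Icc hm.1 le_rfl
  have accelerate : v 0 * m - m ^ 2 / 2 ≤ x m - x 0 := by
    have := sub_le_sub_of_hasDerivAt_le (f := fun t => v 0 * t - t ^ 2 / 2)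
      (f' := fun t => v 0 - t) hm.1 (by fun_prop) (hxc.mono hIcc₁)
      (fun t _ => (((hasDerivAt_id' t).const_mul (v 0)).sub
        ((hasDerivAt_pow 2 t).div_const 2)).congr_deriv (by ring))
      (fun t ht => hx t (hIcc₁ (Ioo_subset_Icc_self ht)))
      (fun t ht => hv_start t (hIcc₁ (Ioo_subset_Icc_self ht)))
    simpa using this
  have brake : -((m - T) ^ 2 / 2) ≤ x T - x m := by
    have := sub_le_sub_of_hasDerivAt_le (f := fun t => (t - T) ^ 2 / 2)
      (f' := fun t => t - T) hm.2 (by fun_prop) (hxc.mono hIcc₂)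
      (fun t _ => ((((hasDerivAt_id' t).sub_const T).pow 2).div_const 2).congr_deriv (by ring))
      (fun t ht => hx t (hIcc₂ (Ioo_subset_Icc_self ht)))
      (fun t ht => hv_end t (hIcc₂ (Ioo_subset_Icc_self ht)))
    simpa using this
  have : ((T - v 0) / 2) ^ 2 - v 0 ^ 2 / 2 = (m - T) ^ 2 / 2 - (v 0 * m - m ^ 2 / 2) := by
    rw [hm_def]; ring
  linarith

theorem two_mul_sqrt_add_le_of_reaches_origin (hT : 0 ≤ T)
    (hx : ∀ t ∈ Icc 0 T, HasDerivAt x (v t) t) (hv : LipschitzOnWith 1 v (Icc 0 T))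
    (hxT : x T = 0) (hvT : v T = 0) :
    2 * √(x 0 + v 0 ^ 2 / 2) + v 0 ≤ T := by
  have hv0 := abs_sub_le_sub_of_lipschitzOnWith_one hv (left_mem_Icc.2 hT) (right_mem_Icc.2 hT) hT
  have := Real.sqrt_le_iff.2
    ⟨by linarith [(abs_le.1 hv0).1], add_sq_div_two_le_of_reaches_origin hT hx hv hxT hvT⟩
  linarith

end Trajectory

/-- If `F₀ ≠ 0`, then `T* = 2Λ₀ + σ₀·v₀` is a lower bound on the transfer time of
any admissible trajectory of the double integrator from `(x₀, v₀)` to the origin. -/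
theorem double_integrator_minimum_time_lower_bound
    (x₀ v₀ : ℝ) (hF : x₀ + Real.sign v₀ * v₀ ^ 2 / 2 ≠ 0)
    (σ₀ Λ₀ Tstar : ℝ)
    (hσ : σ₀ = Real.sign (x₀ + Real.sign v₀ * v₀ ^ 2 / 2))
    (hΛ : Λ₀ = Real.sqrt (σ₀ * x₀ + v₀ ^ 2 / 2))
    (hTstar : Tstar = 2 * Λ₀ + σ₀ * v₀)
    (T : ℝ) (hT : 0 ≤ T)
    (x : ℝ → ℝ)
    (hC1 : ContDiff ℝ 1 x)
    (hdiff : DifferentiableOn ℝ (deriv x) (Set.Icc 0 T))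
    (hbound : ∀ t ∈ Set.Icc (0 : ℝ) T, |deriv (deriv x) t| ≤ 1)
    (hx0 : x 0 = x₀) (hv0 : deriv x 0 = v₀)
    (hxT : x T = 0) (hvT : deriv x T = 0) :
    T ≥ Tstar := by
  have hx : ∀ t ∈ Icc 0 T, HasDerivAt x (deriv x t) t :=
    fun t _ => (hC1.differentiable one_ne_zero t).hasDerivAt
  have hv : LipschitzOnWith 1 (deriv x) (Icc 0 T) :=
    lipschitzOnWith_one_of_abs_hasDerivAt_le_one hdiff.continuousOn
      (fun t ht => (hdiff.differentiableAt (Icc_mem_nhds ht.1 ht.2)).hasDerivAt)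
      (fun t ht => hbound t (Ioo_subset_Icc_self ht))
  subst hTstar hΛ hσ
  rcases hF.lt_or_gt with hneg | hpos
  · have := two_mul_sqrt_add_le_of_reaches_origin (x := -x) hT (fun t ht => (hx t ht).neg)
      hv.neg (by simp [hxT]) (by simp [hvT])
    simp only [Pi.neg_apply, hx0, hv0, neg_sq] at this
    rw [Real.sign_of_neg hneg, neg_one_mul, neg_one_mul]
    linarith
  · have := two_mul_sqrt_add_le_of_reaches_origin hT hx hv hxT hvT
    rw [hx0, hv0] at this
    rw [Real.sign_of_pos hpos, one_mul, one_mul]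
    linarith
end

section
/- Let (x₀, ẋ₀) ∈ ℝ² with F₀ ≠ 0, let ρ* > 0, and define the costate initial values p_{x0} = ρ*/(Λ₀·Σ₀) and p_{ẋ0} = p_{x0}·Δ₁ with Δ₁ = Λ₀ + Σ₀·ẋ₀. Then the bang-bang control law u*(t) = −sgn(p_{ẋ0} − p_{x0}·t) satisfies u*(t) = −Σ₀ for all t < Δ₁ and u*(t) = Σ₀ for all t > Δ₁. (The Pontryagin control −sgn(B'p(t)) generated by this costate coincides with the one-switch bang-bang control switching at time Δ₁.) -/
/-- The Pontryagin control `u*(t) = −sgn(p_{ẋ0} − p_{x0}·t)` generated by the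
costate initial values `p_{x0} = ρ*/(Λ₀·σ₀)`, `p_{ẋ0} = p_{x0}·Δ₁` coincides with
the one-switch bang-bang control switching at time `Δ₁`. -/
theorem double_integrator_costate_generates_bang_bang
    (x₀ v₀ : ℝ) (hF : x₀ + Real.sign v₀ * v₀ ^ 2 / 2 ≠ 0)
    (σ₀ Λ₀ Δ₁ ρ px0 pv0 : ℝ)
    (hσ : σ₀ = Real.sign (x₀ + Real.sign v₀ * v₀ ^ 2 / 2))
    (hΛ : Λ₀ = Real.sqrt (σ₀ * x₀ + v₀ ^ 2 / 2))
    (hΔ : Δ₁ = Λ₀ + σ₀ * v₀)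
    (hρ : ρ > 0)
    (hpx : px0 = ρ / (Λ₀ * σ₀))
    (hpv : pv0 = px0 * Δ₁) :
    (∀ t : ℝ, t < Δ₁ → -Real.sign (pv0 - px0 * t) = -σ₀)
    ∧ (∀ t : ℝ, t > Δ₁ → -Real.sign (pv0 - px0 * t) = σ₀) := by
  set F := x₀ + Real.sign v₀ * v₀ ^ 2 / 2 with hFdef
  have hsv : Real.sign v₀ * v₀ ^ 2 ≤ v₀ ^ 2 := by
    rcases lt_trichotomy v₀ 0 with h | h | h
    · rw [Real.sign_of_neg h]; nlinarith [sq_nonneg v₀]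
    · simp [h]
    · rw [Real.sign_of_pos h]; linarith
  have hsv' : -(v₀ ^ 2) ≤ Real.sign v₀ * v₀ ^ 2 := by
    rcases lt_trichotomy v₀ 0 with h | h | h
    · rw [Real.sign_of_neg h]; linarith
    · simp [h]
    · rw [Real.sign_of_pos h]; nlinarith [sq_nonneg v₀]
  -- σ₀ = ±1 and σ₀ * x₀ + v₀²/2 > 0
  have key : σ₀ * x₀ + v₀ ^ 2 / 2 > 0 ∧ (σ₀ = 1 ∨ σ₀ = -1) := by
    rcases lt_trichotomy F 0 with h | h | h
    · have h' : x₀ + Real.sign v₀ * v₀ ^ 2 / 2 < 0 := by rw [← hFdef]; exact h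
      have : σ₀ = -1 := by rw [hσ, Real.sign_of_neg h]
      refine ⟨?_, Or.inr this⟩
      rw [this]; linarith
    · exact absurd h hF
    · have h' : x₀ + Real.sign v₀ * v₀ ^ 2 / 2 > 0 := by rw [← hFdef]; exact h
      have : σ₀ = 1 := by rw [hσ, Real.sign_of_pos h]
      refine ⟨?_, Or.inl this⟩
      rw [this]; linarith
  obtain ⟨hpos, hσ1⟩ := key
  have hΛpos : Λ₀ > 0 := by rw [hΛ]; exact Real.sqrt_pos.mpr hpos
  have hpxσ : px0 * σ₀ = ρ / Λ₀ := by
    rcases hσ1 with h | h <;> rw [hpx, h] <;> field_simp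
  have hpxσpos : px0 * σ₀ > 0 := by rw [hpxσ]; positivity
  constructor
  · intro t ht
    have h1 : pv0 - px0 * t = px0 * (Δ₁ - t) := by rw [hpv]; ring
    rcases hσ1 with h | h
    · have hpx0 : px0 > 0 := by nlinarith
      rw [h1, Real.sign_of_pos (by nlinarith), h]
    · have hpx0 : px0 < 0 := by nlinarith
      rw [h1, Real.sign_of_neg (by nlinarith), h]
  · intro t ht
    have h1 : pv0 - px0 * t = px0 * (Δ₁ - t) := by rw [hpv]; ring
    rcases hσ1 with h | h
    · have hpx0 : px0 > 0 := by nlinarith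
      rw [h1, Real.sign_of_neg (by nlinarith), h]; ring
    · have hpx0 : px0 < 0 := by nlinarith
      rw [h1, Real.sign_of_pos (by nlinarith), h]
end
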